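/- arXiv:2405.16313 — 8 statements merged into one kernel-verified Lean document; each statement's English description precedes it below -/
import Mathlib

section
/- Let p(z) be a complex polynomial of degree n, and suppose that k of its zeros (counted with multiplicity, 1 ≤ k ≤ n) lie in the closed unit disc |z| ≤ 1. Then the (k-1)-th derivative p^{(k-1)}(z) has at least one zero in the closed disc |z| ≤ 2(n-k+1)/ln 2. -/
/-!
Let `m = n - k + 1`, `R = 2m / ln 2` and suppose `P = p^{(k-1)}` has no zero in `|w| ≤ R`.
As `deg P ≤ m`, expanding `P(w) / P(0) = ∏ (1 - w / r)` over the roots gives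
`|P(w) / P(0) - 1| ≤ e^{m/R} - 1 = √2 - 1 < 1` on the unit disc, so `Re (P / P(0)) > 0` there.

On the other hand, if `f` has `k` zeros in a convex set `S`, then `Re f^{(k-1)}` cannot be positive
on all of `S`. Write `f = (X - a) g` with `a ∈ S`; then
`g^{(k-2)}(w) = ∫₀¹ t^{k-2} f^{(k-1)}(a + t (w - a)) dt`, so positivity of `Re f^{(k-1)}` on `S`
passes to `Re g^{(k-2)}`, and by induction down to a polynomial vanishing at a point of `S`.
Applied to `f = p / P(0)` and the unit disc, this is a contradiction.
-/

open Polynomial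

theorem iterate_derivative_X_sub_C_mul {R : Type*} [CommRing R] (a : R) (g : R[X]) (m : ℕ) :
    derivative^[m + 1] ((X - C a) * g) =
      (X - C a) * derivative^[m + 1] g + (m + 1 : R[X]) * derivative^[m] g := by
  induction m with
  | zero =>
    simp only [zero_add, Function.iterate_one, derivative_mul, derivative_sub, derivative_X,
      derivative_C, sub_zero, one_mul, Nat.cast_zero, Function.iterate_zero, id_eq]
    ring
  | succ m ih =>
    rw [Function.iterate_succ_apply', ih, Function.iterate_succ_apply' _ (m + 1),
      Function.iterate_succ_apply' _ m]
    simp only [derivative_add, derivative_mul, derivative_sub, derivative_X, derivative_C,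
      derivative_natCast, derivative_one, sub_zero, one_mul, zero_mul, add_zero, Nat.cast_add,
      Nat.cast_one]
    ring

theorem Multiset.norm_prod_one_add_sub_one_le {ι R : Type*} [NormedCommRing R] [NormOneClass R]
    (s : Multiset ι) (f : ι → R) :
    ‖(s.map fun i ↦ 1 + f i).prod - 1‖ ≤ Real.exp (s.map fun i ↦ ‖f i‖).sum - 1 := by
  classical
  have := (Finset.univ : Finset s).norm_prod_one_add_sub_one_le fun i ↦ f i
  rwa [Finset.prod_eq_multiset_prod, Finset.sum_eq_multiset_sum, Multiset.map_univ s (1 + f ·),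
    Multiset.map_univ s (‖f ·‖)] at this

theorem Polynomial.Splits.eval_div_eval_zero {K : Type*} [Field K] {P : K[X]} (hP : P.Splits)
    (h0 : P.eval 0 ≠ 0) (x : K) :
    P.eval x / P.eval 0 = (P.roots.map fun r ↦ 1 - x / r).prod := by
  have hroots : ∀ r ∈ P.roots, r ≠ 0 := fun r hr hr0 ↦ h0 (hr0 ▸ (isRoot_of_mem_roots hr).eq_zero)
  rw [hP.eval_eq_prod_roots, hP.eval_eq_prod_roots, mul_div_mul_left _ _
    (leadingCoeff_ne_zero.mpr fun h ↦ h0 (by simp [h])), ← Multiset.prod_map_div]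
  refine congrArg _ (Multiset.map_congr rfl fun r hr ↦ ?_)
  field_simp [hroots r hr]
  ring

theorem re_eval_div_eval_zero_pos {P : ℂ[X]} {m : ℕ} {R ρ : ℝ} (hdeg : P.natDegree ≤ m)
    (hR : m * ρ < R * Real.log 2) (hroots : ∀ r, P.IsRoot r → R ≤ ‖r‖) {w : ℂ} (hw : ‖w‖ ≤ ρ) :
    0 < (eval w P / eval 0 P).re := by
  have hρ : 0 ≤ ρ := (norm_nonneg w).trans hw
  have hR0 : 0 < R :=
    pos_of_mul_pos_left ((by positivity : (0 : ℝ) ≤ m * ρ).trans_lt hR) (Real.log_pos one_lt_two).le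
  have h0 : eval 0 P ≠ 0 := fun h ↦ (hroots 0 h).not_gt (by simpa using hR0)
  have hsum : (P.roots.map fun r ↦ ‖-(w / r)‖).sum < Real.log 2 := by
    calc _ ≤ Multiset.card P.roots • (ρ / R) := by
          rw [← Multiset.card_map fun r ↦ ‖-(w / r)‖]
          refine Multiset.sum_le_card_nsmul _ _ ?_
          simp only [Multiset.mem_map, norm_neg, norm_div]
          rintro _ ⟨r, hr, rfl⟩
          exact div_le_div₀ hρ hw hR0 (hroots r (isRoot_of_mem_roots hr))
      _ ≤ m * (ρ / R) := by
          rw [nsmul_eq_mul]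
          gcongr
          exact_mod_cast (card_roots' P).trans hdeg
      _ < Real.log 2 := by rwa [← mul_div_assoc, div_lt_iff₀ hR0, mul_comm (Real.log 2)]
  have hnorm : ‖eval w P / eval 0 P - 1‖ < 1 := by
    rw [(IsAlgClosed.splits P).eval_div_eval_zero h0]
    simp_rw [sub_eq_add_neg (1 : ℂ)]
    calc _ ≤ Real.exp _ - 1 := Multiset.norm_prod_one_add_sub_one_le _ _
      _ < Real.exp (Real.log 2) - 1 := by gcongr
      _ = 1 := by rw [Real.exp_log two_pos]; norm_num
  have hre := (Complex.abs_re_le_norm _).trans_lt hnorm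
  rw [Complex.sub_re, Complex.one_re, abs_lt] at hre
  linarith

theorem eval_iterate_derivative_eq_integral (a w : ℂ) (g : ℂ[X]) (m : ℕ) :
    eval w (derivative^[m] g) = ∫ t in (0 : ℝ)..1,
      (t : ℂ) ^ m * eval (a + t * (w - a)) (derivative^[m + 1] ((X - C a) * g)) := by
  set H : ℂ[X] := X ^ (m + 1) * (derivative^[m] g).comp (C a + X * C (w - a))
  have hH : ∀ s : ℂ, eval s (derivative H) =
      s ^ m * eval (a + s * (w - a)) (derivative^[m + 1] ((X - C a) * g)) := by
    intro s
    rw [iterate_derivative_X_sub_C_mul, Function.iterate_succ_apply']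
    simp only [H, map_sub, derivative_mul, derivative_X_pow_succ, map_add, map_natCast, map_one,
      derivative_comp, derivative_C, derivative_X, one_mul, sub_self, mul_zero, add_zero, zero_add, eval_add, eval_mul, eval_natCast, eval_one, eval_pow,
      eval_X, eval_comp, eval_C, eval_sub, add_sub_cancel_left]
    ring
  calc eval w (derivative^[m] g) = eval 1 H - eval 0 H := by simp [H]
    _ = ∫ t in (0 : ℝ)..1, eval (t : ℂ) (derivative H) :=
      (intervalIntegral.integral_eq_sub_of_hasDerivAt (fun t _ ↦ (H.hasDerivAt t).comp_ofReal)
        (((derivative H).continuous.comp Complex.continuous_ofReal).intervalIntegrable 0 1)).symm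
    _ = _ := by simp only [hH]

theorem Convex.re_eval_iterate_derivative_pos_of_X_sub_C_mul {S : Set ℂ} (hS : Convex ℝ S)
    {a : ℂ} (ha : a ∈ S) {g : ℂ[X]} {m : ℕ}
    (h : ∀ w ∈ S, 0 < (eval w (derivative^[m + 1] ((X - C a) * g))).re) {w : ℂ} (hw : w ∈ S) :
    0 < (eval w (derivative^[m] g)).re := by
  set F : ℝ → ℂ := fun t ↦
    (t : ℂ) ^ m * eval (a + t * (w - a)) (derivative^[m + 1] ((X - C a) * g))
  have hF : Continuous F := by fun_prop
  rw [eval_iterate_derivative_eq_integral a, ← Complex.reCLM_apply,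
    ← Complex.reCLM.intervalIntegral_comp_comm (hF.intervalIntegrable 0 1)]
  refine intervalIntegral.intervalIntegral_pos_of_pos_on
    ((Complex.continuous_re.comp hF).intervalIntegrable 0 1) (fun t ht ↦ ?_) one_pos
  have hmem : a + t * (w - a) ∈ S := by
    simpa [Complex.real_smul] using hS.add_smul_sub_mem ha hw ⟨ht.1.le, ht.2.le⟩
  simpa [F, ← Complex.ofReal_pow, Complex.re_ofReal_mul] using mul_pos (pow_pos ht.1 m) (h _ hmem)

theorem Convex.exists_re_eval_iterate_derivative_nonpos {S : Set ℂ} (hS : Convex ℝ S) :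
    ∀ {k : ℕ} {z : Fin (k + 1) → ℂ} {f : ℂ[X]}, (∀ i, z i ∈ S) → (∏ i, (X - C (z i))) ∣ f →
      ∃ w ∈ S, (eval w (derivative^[k] f)).re ≤ 0
  | 0, z, f, hz, ⟨c, hc⟩ => ⟨z 0, hz 0, by simp [hc]⟩
  | k + 1, z, f, hz, ⟨c, hc⟩ => by
    by_contra! hpos
    have hf : f = (X - C (z 0)) * ((∏ i : Fin (k + 1), (X - C (z i.succ))) * c) := by
      rw [hc, Fin.prod_univ_succ, mul_assoc]
    obtain ⟨w, hw, hre⟩ := hS.exists_re_eval_iterate_derivative_nonpos (fun i ↦ hz i.succ)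
      (dvd_mul_right _ c)
    exact hre.not_gt (hS.re_eval_iterate_derivative_pos_of_X_sub_C_mul (hz 0) (hf ▸ hpos) hw)

theorem kakeya_closed_disc_general (n k : ℕ) (hk1 : 1 ≤ k) (hkn : k ≤ n)
    (p q : Polynomial ℂ) (hp : p.natDegree = n)
    (z : Fin k → ℂ) (hz : ∀ i, ‖z i‖ ≤ 1)
    (hfac : p = (∏ i, (X - C (z i))) * q) :
    ∃ w : ℂ, (derivative^[k - 1] p).IsRoot w ∧
      ‖w‖ ≤ 2 * ((n : ℝ) - k + 1) / Real.log 2 := by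
  obtain ⟨j, rfl⟩ : ∃ j, k = j + 1 := ⟨k - 1, by omega⟩
  rw [Nat.add_sub_cancel]
  set P := derivative^[j] p
  by_contra! hfar
  have hdeg : P.natDegree ≤ n - j := hp ▸ natDegree_iterate_derivative p j
  have hR : ((n - j : ℕ) : ℝ) * 1 < 2 * ((n : ℝ) - (j + 1 : ℕ) + 1) / Real.log 2 * Real.log 2 := by
    rw [div_mul_cancel₀ _ (Real.log_pos one_lt_two).ne', Nat.cast_sub (by omega)]
    push_cast
    linarith [(by exact_mod_cast hkn : (j : ℝ) + 1 ≤ n)]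
  have hdvd : (∏ i, (X - C (z i))) ∣ C (eval 0 P)⁻¹ * p := by
    rw [hfac]
    exact (dvd_mul_right _ q).mul_left _
  obtain ⟨w, hw, hre⟩ := (convex_closedBall (0 : ℂ) 1).exists_re_eval_iterate_derivative_nonpos
    (fun i ↦ mem_closedBall_zero_iff.mpr (hz i)) hdvd
  refine hre.not_gt ?_
  rw [iterate_derivative_C_mul, eval_mul, eval_C, inv_mul_eq_div]
  exact re_eval_div_eval_zero_pos hdeg hR (fun r hr ↦ (hfar r hr).le) (mem_closedBall_zero_iff.mp hw)

/-- **Kakeya-type theorem (zeros with multiplicity).**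
If `p` is a complex polynomial of degree `n ≥ 1` and `k` of its zeros (counted with
multiplicity, `1 ≤ k ≤ n`) lie in the closed unit disc, then `p^{(k-1)}` has at least
one zero in the closed disc `|z| ≤ 2(n-k+1)/ln 2`. -/
theorem kakeya_closed_disc (n k : ℕ) (hn : 1 ≤ n) (hk1 : 1 ≤ k) (hkn : k ≤ n)
    (p q : Polynomial ℂ) (hp : p.natDegree = n)
    (z : Fin k → ℂ) (hz : ∀ i, ‖z i‖ ≤ 1)
    (hfac : p = (∏ i, (X - C (z i))) * q) :
    ∃ w : ℂ, (derivative^[k - 1] p).IsRoot w ∧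
      ‖w‖ ≤ 2 * ((n : ℝ) - k + 1) / Real.log 2 :=
  kakeya_closed_disc_general n k hk1 hkn p q hp z hz hfac
end

section
/- Let p(z) be a complex polynomial of degree n having k pairwise distinct zeros z_1,...,z_k (1 ≤ k ≤ n) in the closed unit disc |z| ≤ 1. Then the (k-1)-th derivative p^{(k-1)}(z) has at least one zero in the open disc |z| < 2(n-k+1)/ln 2. -/
/-!
Let `j = k - 1` and `q = p^{(j)}`, a polynomial of degree `m ≤ n - j`. Since `∏ (X - z_i)`
divides `p`, the coefficient of `X^j` in the remainder of `p` modulo it vanishes. That coefficient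
is `∑_d p_d h_{d-j}(z)`, where `h` are the complete homogeneous symmetric polynomials, `h_0 = 1`,
`h_{d-j}(z) = 0` for `d < j` and `|h_{d-j}(z)| ≤ C(d, j)` on the unit disc. Hence
`|p_j| ≤ ∑_{d>j} C(d, j) |p_d|`, which after multiplying by `j!` reads
`|q_0| ≤ ∑_{i≥1} |q_i|`.

If every root of `q` had modulus at least `R`, then the roots of the reversed polynomial would lie
in the disc of radius `1/R`, and Vieta would give `|q_i| ≤ C(m, i) R^{-i} |q_0|`, so that
`∑_{i≥1} |q_i| ≤ ((1 + 1/R)^m - 1) |q_0| < |q_0|` as soon as `(1 + 1/R)^m < 2`. For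
`R = 2m / ln 2` this holds because `(1 + 1/R)^m ≤ e^{m/R} = √2`.
-/

open Polynomial Finset

namespace Polynomial

section MonicDivision

variable {R : Type*} [CommRing R] {g : R[X]}

theorem modByMonic_X_sub_C_mul (f : R[X]) (hg : g.Monic) (a : R) :
    f %ₘ ((X - C a) * g) = C ((f /ₘ g).eval a) * g + f %ₘ g := by
  nontriviality R
  set Q := f /ₘ g
  refine (div_modByMonic_unique (Q /ₘ (X - C a)) _ ((monic_X_sub_C a).mul hg) ⟨?_, ?_⟩).2
  · have hQ : (X - C a) * (Q /ₘ (X - C a)) + C (Q.eval a) = Q := by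
      rw [← modByMonic_X_sub_C_eq_C_eval, add_comm, modByMonic_add_div]
    linear_combination g * hQ + modByMonic_add_div f g
  · refine degree_lt_degree ?_
    rw [(monic_X_sub_C a).natDegree_mul hg, natDegree_X_sub_C]
    calc (C (Q.eval a) * g + f %ₘ g).natDegree
        ≤ max (C (Q.eval a) * g).natDegree (f %ₘ g).natDegree := natDegree_add_le _ _
      _ ≤ g.natDegree := max_le (natDegree_C_mul_le _ _) (natDegree_modByMonic_le _ hg)
      _ < 1 + g.natDegree := by omega

theorem X_mul_divByMonic (f : R[X]) (hg : g.Monic) :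
    (X * f) /ₘ g = X * (f /ₘ g) + C ((f %ₘ g).coeff (g.natDegree - 1)) := by
  nontriviality R
  set c := (f %ₘ g).coeff (g.natDegree - 1)
  refine (div_modByMonic_unique _ (X * (f %ₘ g) - C c * g) hg ⟨?_, ?_⟩).1
  · linear_combination X * modByMonic_add_div f g
  · obtain hN | ⟨N, hN⟩ : g.natDegree = 0 ∨ ∃ N, g.natDegree = N + 1 :=
      (Nat.eq_zero_or_eq_succ_pred _).imp id fun h => ⟨_, h⟩
    · simp [c, hg.natDegree_eq_zero.mp hN]
    rw [degree_eq_natDegree hg.ne_zero, hN, degree_lt_iff_coeff_zero]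
    intro m hm
    obtain ⟨m, rfl⟩ : ∃ m', m = m' + 1 := ⟨m - 1, by omega⟩
    rw [coeff_sub, coeff_X_mul, coeff_C_mul]
    rcases (Nat.le_of_succ_le_succ hm).eq_or_lt with rfl | hlt
    · rw [← hN, hg.coeff_natDegree]
      simp [c, hN]
    · rw [coeff_eq_zero_of_natDegree_lt (by omega : g.natDegree < m + 1),
        coeff_eq_zero_of_degree_lt ((degree_modByMonic_lt f hg).trans_le ?_)]
      · ring
      rw [degree_eq_natDegree hg.ne_zero, hN]
      exact_mod_cast hlt

end MonicDivision

section DividedDifference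

variable {R : Type*} [CommRing R]

noncomputable def nodePoly (s : Multiset R) : R[X] := (s.map fun a => X - C a).prod

theorem nodePoly_monic (s : Multiset R) : (nodePoly s).Monic := monic_multisetProd_X_sub_C s

@[simp]
theorem nodePoly_zero : nodePoly (0 : Multiset R) = 1 := by simp [nodePoly]

theorem nodePoly_cons (a : R) (s : Multiset R) :
    nodePoly (a ::ₘ s) = (X - C a) * nodePoly s := by simp [nodePoly]

@[simp]
theorem natDegree_nodePoly [Nontrivial R] (s : Multiset R) :
    (nodePoly s).natDegree = Multiset.card s :=
  natDegree_multiset_prod_X_sub_C_eq_card s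

theorem nodePoly_dvd_of_nodup [IsDomain R] {s : Multiset R} {p : R[X]} (hs : s.Nodup)
    (hroot : ∀ a ∈ s, p.IsRoot a) : nodePoly s ∣ p := by
  rcases eq_or_ne p 0 with rfl | hp
  · exact dvd_zero _
  refine (Multiset.prod_X_sub_C_dvd_iff_le_roots hp s).2 ((Multiset.le_iff_subset hs).2 ?_)
  exact fun a ha => (mem_roots hp).2 (hroot a ha)

/-- The divided difference of `X ^ d` at the nodes `s`, read off as the leading coefficient of the
remainder of `X ^ d` modulo `nodePoly s`; it is the complete homogeneous symmetric polynomial of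
degree `d + 1 - card s` evaluated at `s`. -/
noncomputable def divDiffPow (s : Multiset R) (d : ℕ) : R :=
  (X ^ d %ₘ nodePoly s).coeff (Multiset.card s - 1)

@[simp]
theorem divDiffPow_zero (d : ℕ) : divDiffPow (0 : Multiset R) d = 0 := by
  simp [divDiffPow]

variable {s : Multiset R}

theorem sum_coeff_mul_divDiffPow_eq_zero {p : R[X]} (hdvd : nodePoly s ∣ p) {N : ℕ}
    (hN : p.natDegree < N) : ∑ d ∈ range N, p.coeff d * divDiffPow s d = 0 := by
  have hlin : p %ₘ nodePoly s = ∑ d ∈ range N, p.coeff d • (X ^ d %ₘ nodePoly s) := by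
    conv_lhs => rw [p.as_sum_range_C_mul_X_pow' hN]
    simp_rw [← smul_eq_C_mul, ← modByMonicHom_apply, map_sum, map_smul]
  have := congrArg (coeff · (Multiset.card s - 1)) hlin
  simpa [(modByMonic_eq_zero_iff_dvd (nodePoly_monic s)).2 hdvd, finsetSum_coeff,
    divDiffPow] using this.symm

variable [Nontrivial R] {d : ℕ}

theorem X_pow_modByMonic_nodePoly_of_lt (h : d < Multiset.card s) :
    X ^ d %ₘ nodePoly s = X ^ d := by
  rw [modByMonic_eq_self_iff (nodePoly_monic s), degree_X_pow,
    degree_eq_natDegree (nodePoly_monic s).ne_zero, natDegree_nodePoly]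
  exact_mod_cast h

theorem divDiffPow_of_lt (h : d + 1 < Multiset.card s) : divDiffPow s d = 0 := by
  rw [divDiffPow, X_pow_modByMonic_nodePoly_of_lt (by omega), coeff_X_pow, if_neg (by omega)]

theorem divDiffPow_card_sub_one (hs : s ≠ 0) : divDiffPow s (Multiset.card s - 1) = 1 := by
  have := Multiset.card_pos.2 hs
  rw [divDiffPow, X_pow_modByMonic_nodePoly_of_lt (by omega), coeff_X_pow_self]

theorem divDiffPow_cons (a : R) (s : Multiset R) (d : ℕ) :
    divDiffPow (a ::ₘ s) d = (X ^ d /ₘ nodePoly s).eval a := by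
  rw [divDiffPow, nodePoly_cons, modByMonic_X_sub_C_mul _ (nodePoly_monic s), Multiset.card_cons,
    Nat.add_sub_cancel, coeff_add, coeff_C_mul, coeff_eq_zero_of_degree_lt (p := X ^ d %ₘ _),
    ← natDegree_nodePoly, (nodePoly_monic s).coeff_natDegree, mul_one, add_zero]
  refine (degree_modByMonic_lt _ (nodePoly_monic s)).trans_le ?_
  rw [degree_eq_natDegree (nodePoly_monic s).ne_zero, natDegree_nodePoly]

theorem divDiffPow_cons_succ (a : R) (s : Multiset R) (d : ℕ) :
    divDiffPow (a ::ₘ s) (d + 1) = a * divDiffPow (a ::ₘ s) d + divDiffPow s d := by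
  rw [divDiffPow_cons, divDiffPow_cons, pow_succ', X_mul_divByMonic _ (nodePoly_monic s),
    natDegree_nodePoly]
  simp [divDiffPow]

end DividedDifference

section NormBounds

variable {K : Type*} [NormedField K] {s : Multiset K}

theorem norm_divDiffPow_le (hs : ∀ a ∈ s, ‖a‖ ≤ 1) (d : ℕ) :
    ‖divDiffPow s d‖ ≤ d.choose (Multiset.card s - 1) := by
  induction s using Multiset.induction_on generalizing d with
  | empty => simp
  | cons a t ih =>
    have ha : ‖a‖ ≤ 1 := hs a (Multiset.mem_cons_self a t)
    replace ih := ih fun b hb => hs b (Multiset.mem_cons_of_mem hb)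
    rw [Multiset.card_cons, Nat.add_sub_cancel]
    obtain rfl | ⟨c, hc⟩ : t = 0 ∨ ∃ c, Multiset.card t = c + 1 :=
      (Nat.eq_zero_or_eq_succ_pred _).imp Multiset.card_eq_zero.1 fun h => ⟨_, h⟩
    · induction d with
      | zero => rw [divDiffPow_cons]; simp
      | succ d ihd =>
        rw [divDiffPow_cons_succ, divDiffPow_zero, add_zero, norm_mul]
        simpa using mul_le_one₀ ha (norm_nonneg _) (by simpa using ihd)
    induction d with
    | zero => rw [divDiffPow_of_lt (by simp [hc])]; simp
    | succ d ihd =>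
      rw [divDiffPow_cons_succ, hc, Nat.choose_succ_succ', Nat.cast_add,
        add_comm (d.choose c : ℝ)]
      refine (norm_add_le _ _).trans (add_le_add ?_ (by simpa [hc] using ih d))
      rw [norm_mul, ← one_mul (d.choose (c + 1) : ℝ)]
      exact mul_le_mul ha (by rwa [hc] at ihd) (norm_nonneg _) zero_le_one

theorem norm_coeff_le_of_nodePoly_dvd (hs : ∀ a ∈ s, ‖a‖ ≤ 1) {p : K[X]}
    (hdvd : nodePoly s ∣ p) {j : ℕ} (hj : Multiset.card s = j + 1) :
    ‖p.coeff j‖ ≤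
      ∑ i ∈ range (p.natDegree - j), (i + 1 + j).choose j * ‖p.coeff (i + 1 + j)‖ := by
  have hone : divDiffPow s j = 1 := by
    simpa [hj] using divDiffPow_card_sub_one (s := s) (by rintro rfl; simp at hj)
  have hsum := sum_coeff_mul_divDiffPow_eq_zero hdvd (N := j + (p.natDegree - j + 1)) (by omega)
  rw [sum_range_add, sum_eq_zero fun d hd => by
      rw [divDiffPow_of_lt (by simp at hd; omega), mul_zero],
    zero_add, sum_range_succ', add_zero, hone, mul_one] at hsum
  rw [eq_neg_of_add_eq_zero_right hsum, norm_neg]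
  refine (norm_sum_le _ _).trans (sum_le_sum fun i _ => ?_)
  rw [norm_mul, mul_comm, add_comm j]
  gcongr
  simpa [hj] using norm_divDiffPow_le hs (i + 1 + j)

theorem norm_coeff_zero_iterate_derivative_le {𝕜 : Type*} [RCLike 𝕜] {s : Multiset 𝕜}
    (hs : ∀ a ∈ s, ‖a‖ ≤ 1) {p : 𝕜[X]} (hdvd : nodePoly s ∣ p) {j : ℕ}
    (hj : Multiset.card s = j + 1) :
    ‖(derivative^[j] p).coeff 0‖ ≤
      ∑ i ∈ range (p.natDegree - j), ‖(derivative^[j] p).coeff (i + 1)‖ := by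
  simp_rw [coeff_iterate_derivative, nsmul_eq_mul, norm_mul, RCLike.norm_natCast,
    Nat.descFactorial_eq_factorial_mul_choose, zero_add, Nat.choose_self, Nat.cast_mul,
    Nat.cast_one, mul_one, mul_assoc, ← mul_sum]
  gcongr
  exact norm_coeff_le_of_nodePoly_dvd hs hdvd hj

end NormBounds

section RootsOutsideDisc

variable {K : Type*} [NormedField K] {q : K[X]} {r : ℝ}

theorem coeff_zero_ne_zero_of_forall_root_norm_ge (hr : 0 < r)
    (hroots : ∀ w, q.IsRoot w → r ≤ ‖w‖) : q.coeff 0 ≠ 0 := by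
  intro h
  have := hroots 0 (by rwa [IsRoot, ← coeff_zero_eq_eval_zero])
  rw [norm_zero] at this
  linarith

theorem norm_coeff_le_of_forall_root_norm_ge [IsAlgClosed K] (hr : 0 < r)
    (hroots : ∀ w, q.IsRoot w → r ≤ ‖w‖) (i : ℕ) :
    ‖q.coeff i‖ ≤ q.natDegree.choose i * r⁻¹ ^ i * ‖q.coeff 0‖ := by
  have h0 := coeff_zero_ne_zero_of_forall_root_norm_ge hr hroots
  have hq : q ≠ 0 := fun h => h0 (by simp [h])
  rcases lt_or_ge q.natDegree i with hi | hi
  · simp [coeff_eq_zero_of_natDegree_lt hi, Nat.choose_eq_zero_of_lt hi]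
  -- `g` is monic of degree `q.natDegree`, with roots the inverses of those of `q`.
  set g := C (q.coeff 0)⁻¹ * q.reverse
  have hmonic : g.Monic := by
    rw [Monic, leadingCoeff_mul, leadingCoeff_C, reverse_leadingCoeff,
      trailingCoeff_eq_coeff_zero h0, inv_mul_cancel₀ h0]
  have hdeg : g.natDegree = q.natDegree := by
    rw [natDegree_C_mul (inv_ne_zero h0), reverse_natDegree,
      natTrailingDegree_eq_zero.2 (.inr h0), Nat.sub_zero]
  have hgroots : ∀ z ∈ (g.map (RingHom.id K)).roots, ‖z‖ ≤ r⁻¹ := by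
    intro z hz
    rw [map_id] at hz
    have hz' : q.reverse.eval z = 0 := by
      simpa [g, h0] using isRoot_of_mem_roots hz
    have hz0 : z ≠ 0 := by
      rintro rfl
      rw [← coeff_zero_eq_eval_zero, coeff_zero_reverse] at hz'
      exact hq (leadingCoeff_eq_zero.1 hz')
    have : Invertible z⁻¹ := invertibleOfNonzero (inv_ne_zero hz0)
    have hroot : q.IsRoot z⁻¹ := by
      rw [IsRoot, ← eval₂_id, ← eval₂_reverse_eq_zero_iff, invOf_eq_inv, inv_inv,
        eval₂_id]
      exact hz'
    have := hroots _ hroot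
    rw [norm_inv] at this
    exact (le_inv_comm₀ hr (norm_pos_iff.2 hz0)).1 this
  have hbound := coeff_le_of_roots_le (q.natDegree - i) hmonic (IsAlgClosed.splits _) hgroots
  rw [map_id, coeff_C_mul, coeff_reverse, revAt_le (Nat.sub_le _ _), norm_mul, norm_inv, hdeg,
    Nat.sub_sub_self hi, Nat.choose_symm hi] at hbound
  rw [inv_mul_le_iff₀ (norm_pos_iff.2 h0)] at hbound
  linarith

theorem sum_norm_coeff_succ_le_of_forall_root_norm_ge [IsAlgClosed K] (hr : 0 < r)
    (hroots : ∀ w, q.IsRoot w → r ≤ ‖w‖) {m : ℕ} (hm : q.natDegree ≤ m) :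
    ∑ i ∈ range m, ‖q.coeff (i + 1)‖ ≤ ((1 + r⁻¹) ^ m - 1) * ‖q.coeff 0‖ := by
  have hbinom : (1 + r⁻¹) ^ m - 1 = ∑ i ∈ range m, m.choose (i + 1) * r⁻¹ ^ (i + 1) := by
    rw [add_comm, add_pow, sum_range_succ']
    simp [mul_comm]
  rw [hbinom, sum_mul]
  refine sum_le_sum fun i _ => (norm_coeff_le_of_forall_root_norm_ge hr hroots _).trans ?_
  gcongr

theorem exists_root_norm_lt_of_norm_coeff_zero_le [IsAlgClosed K] (hr : 0 < r) {m : ℕ}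
    (hm : q.natDegree ≤ m) (hpow : (1 + r⁻¹) ^ m < 2)
    (hq : ‖q.coeff 0‖ ≤ ∑ i ∈ range m, ‖q.coeff (i + 1)‖) :
    ∃ w, q.IsRoot w ∧ ‖w‖ < r := by
  by_contra! hroots
  have h0 := norm_pos_iff.2 (coeff_zero_ne_zero_of_forall_root_norm_ge hr hroots)
  have := hq.trans (sum_norm_coeff_succ_le_of_forall_root_norm_ge hr hroots hm)
  nlinarith

end RootsOutsideDisc

end Polynomial

open Real in
theorem one_add_inv_pow_lt_two (m : ℕ) : (1 + (2 * m / log 2)⁻¹) ^ m < 2 := by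
  rcases m.eq_zero_or_pos with rfl | hm
  · norm_num
  have hlog : 0 < log 2 := log_pos one_lt_two
  set x := (2 * m / log 2)⁻¹
  calc (1 + x) ^ m ≤ exp x ^ m := by
        gcongr
        linarith [add_one_le_exp x]
    _ = exp (log 2 / 2) := by
        rw [← exp_nat_mul]
        congr 1
        simp only [x]
        field_simp
    _ < exp (log 2) := exp_lt_exp.2 (by linarith)
    _ = 2 := exp_log two_pos

theorem kakeya_open_disc_general (n k : ℕ) (hk1 : 1 ≤ k) (hkn : k ≤ n)
    (p : Polynomial ℂ) (hp : p.natDegree = n)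
    (z : Fin k → ℂ) (hinj : Function.Injective z)
    (hz : ∀ i, ‖z i‖ ≤ 1) (hroot : ∀ i, p.IsRoot (z i)) :
    ∃ w : ℂ, (derivative^[k - 1] p).IsRoot w ∧
      ‖w‖ < 2 * ((n : ℝ) - k + 1) / Real.log 2 := by
  obtain ⟨j, rfl⟩ : ∃ j, k = j + 1 := ⟨k - 1, by omega⟩
  set s : Multiset ℂ := univ.val.map z
  have hs : ∀ a ∈ s, ‖a‖ ≤ 1 := Multiset.forall_mem_map_iff.2 fun i _ => hz i
  have hdvd : nodePoly s ∣ p :=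
    nodePoly_dvd_of_nodup (univ.nodup.map hinj) (Multiset.forall_mem_map_iff.2 fun i _ => hroot i)
  have hcoeff := norm_coeff_zero_iterate_derivative_le hs hdvd (j := j) (by simp [s])
  have hradius : 2 * ((n : ℝ) - (j + 1 : ℕ) + 1) / Real.log 2 =
      2 * ((n - j : ℕ) : ℝ) / Real.log 2 := by
    rw [Nat.cast_sub (by omega)]
    push_cast
    ring
  rw [Nat.add_sub_cancel, hradius]
  have hnj : 0 < n - j := by omega
  refine exists_root_norm_lt_of_norm_coeff_zero_le (by positivity)
    ((natDegree_iterate_derivative p j).trans_eq (by rw [hp])) (one_add_inv_pow_lt_two _) ?_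
  rwa [hp] at hcoeff

/-- **Kakeya-type theorem (pairwise distinct zeros).**
If `p` is a complex polynomial of degree `n ≥ 1` having `k` pairwise distinct zeros
in the closed unit disc (`1 ≤ k ≤ n`), then `p^{(k-1)}` has at least one zero in the
open disc `|z| < 2(n-k+1)/ln 2`. -/
theorem kakeya_open_disc (n k : ℕ) (hn : 1 ≤ n) (hk1 : 1 ≤ k) (hkn : k ≤ n)
    (p : Polynomial ℂ) (hp : p.natDegree = n)
    (z : Fin k → ℂ) (hinj : Function.Injective z)
    (hz : ∀ i, ‖z i‖ ≤ 1) (hroot : ∀ i, p.IsRoot (z i)) :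
    ∃ w : ℂ, (derivative^[k - 1] p).IsRoot w ∧
      ‖w‖ < 2 * ((n : ℝ) - k + 1) / Real.log 2 :=
  kakeya_open_disc_general n k hk1 hkn p hp z hinj hz hroot
end

section
/- Let a(z) = Σ_{j=0}^n a_j z^j be a complex polynomial of degree n and b(z) = Σ_{j=0}^m b_j z^j a complex polynomial of degree m with m ≤ n (setting b_j = 0 for m < j ≤ n). If A_n(a,b) := Σ_{j=0}^n (-1)^j a_j b_{n-j} / C(n,j) = 0, then the polynomials a^{(n-m)}(z) (of degree m) and b(z) are apolar, i.e. A_m(a^{(n-m)}, b) = Σ_{j=0}^m (-1)^j c_j b_{m-j} / C(m,j) = 0, where c_j are the coefficients of a^{(n-m)}. -/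
open Polynomial Nat

/-- The apolarity form `A_N(u,v) = Σ_{j=0}^N (-1)^j u_j v_{N-j} / C(N,j)`. -/
noncomputable def apolarSum (N : ℕ) (u v : Polynomial ℂ) : ℂ :=
  ∑ j ∈ Finset.range (N + 1),
    (-1) ^ j * u.coeff j * v.coeff (N - j) / (N.choose j : ℂ)

/-- **Theorem 2 of the paper.** If `a` has degree `n`, `b` has degree `m ≤ n`, and
`A_n(a,b) = 0`, then `a^{(n-m)}` and `b` are apolar: `A_m(a^{(n-m)}, b) = 0`. -/
theorem apolar_of_weakly_apolar (n m : ℕ) (hmn : m ≤ n)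
    (a b : Polynomial ℂ) (ha : a.natDegree = n) (hb : b.natDegree = m)
    (h : apolarSum n a b = 0) :
    apolarSum m (derivative^[n - m] a) b = 0 := by
  set k := n - m with hk
  have hnkm : n = k + (m + 1) - 1 := by omega
  have key : apolarSum n a b =
      ∑ j ∈ Finset.range (m + 1),
        (-1) ^ (k + j) * a.coeff (k + j) * b.coeff (n - (k + j)) / (n.choose (k + j) : ℂ) := by
    have : n + 1 = k + (m + 1) := by omega
    rw [apolarSum, this, Finset.sum_range_add]
    have h0 : ∑ j ∈ Finset.range k,
        (-1) ^ j * a.coeff j * b.coeff (n - j) / (n.choose j : ℂ) = 0 := by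
      apply Finset.sum_eq_zero
      intro j hj
      rw [Finset.mem_range] at hj
      have : b.coeff (n - j) = 0 := by
        apply coeff_eq_zero_of_natDegree_lt
        omega
      rw [this]
      ring
    rw [h0, zero_add]
  rw [apolarSum]
  have hzero : ∑ j ∈ Finset.range (m + 1),
      (-1) ^ (k + j) * a.coeff (k + j) * b.coeff (n - (k + j)) / (n.choose (k + j) : ℂ) = 0 := by
    rw [← key]; exact h
  have main : ∑ j ∈ Finset.range (m + 1),
      (-1) ^ j * (derivative^[k] a).coeff j * b.coeff (m - j) / (m.choose j : ℂ)
      = ((-1) ^ k * (n ! : ℂ) / (m ! : ℂ)) *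
        ∑ j ∈ Finset.range (m + 1),
          (-1) ^ (k + j) * a.coeff (k + j) * b.coeff (n - (k + j)) / (n.choose (k + j) : ℂ) := by
    rw [Finset.mul_sum]
    apply Finset.sum_congr rfl
    intro j hj
    rw [Finset.mem_range] at hj
    have hjm : j ≤ m := by omega
    have hnm : n - (k + j) = m - j := by omega
    rw [coeff_iterate_derivative, hnm]
    have hd : (j + k).descFactorial k * m ! * n.choose (k + j) = n ! * m.choose j := by
      have e1 : j ! * (j + k).descFactorial k = (j + k)! := by
        have := Nat.factorial_mul_descFactorial (show k ≤ j + k by omega)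
        simpa using this
      have e2 : m.choose j * j ! * (m - j)! = m ! := Nat.choose_mul_factorial_mul_factorial hjm
      have e3 : n.choose (k + j) * (k + j)! * (m - j)! = n ! := by
        have := Nat.choose_mul_factorial_mul_factorial (show k + j ≤ n by omega)
        rwa [show n - (k + j) = m - j by omega] at this
      have hpos : 0 < j ! * (m - j)! := Nat.mul_pos j.factorial_pos (m - j).factorial_pos
      apply Nat.eq_of_mul_eq_mul_left hpos
      calc j ! * (m - j)! * ((j + k).descFactorial k * m ! * n.choose (k + j))
          = (j ! * (j + k).descFactorial k) * (m - j)! * n.choose (k + j) * m ! := by ring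
        _ = (n.choose (k + j) * (k + j)! * (m - j)!) * m ! := by rw [e1]; ring
        _ = n ! * m ! := by rw [e3]
        _ = j ! * (m - j)! * (n ! * m.choose j) := by
            rw [← e2]; ring
    have hc1 : (m.choose j : ℂ) ≠ 0 := by
      exact_mod_cast (Nat.choose_pos hjm).ne'
    have hc2 : (n.choose (k + j) : ℂ) ≠ 0 := by
      exact_mod_cast (Nat.choose_pos (show k + j ≤ n by omega)).ne'
    have hm : (m ! : ℂ) ≠ 0 := by exact_mod_cast m.factorial_pos.ne'
    have hsign : ((-1 : ℂ)) ^ k * (-1) ^ (k + j) = (-1) ^ j := by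
      rw [pow_add, ← mul_assoc, ← pow_add, ← two_mul]
      simp [pow_mul]
    have hdC : ((j + k).descFactorial k : ℂ) * m ! * n.choose (k + j)
        = n ! * m.choose j := by exact_mod_cast hd
    field_simp
    rw [add_comm j k] at hdC ⊢
    linear_combination ((-1 : ℂ) ^ j * a.coeff (k + j) * b.coeff (m - j)) * hdC
      - ((n ! : ℂ) * (m.choose j : ℂ) * a.coeff (k + j) * b.coeff (m - j)) * hsign
  rw [main, hzero, mul_zero]
end

section
/- (Grace's theorem, closed-disc case) Let a(z) and b(z) be complex polynomials, both of degree n ≥ 1, which are apolar, i.e. A_n(a,b) = 0. If all zeros of a(z) lie in a closed disc D = {z : |z - c| ≤ r}, then at least one zero of b(z) lies in D. -/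
open Polynomial

/-!
Induction on `n`. For `n = 1`, apolarity says that `a` and `b` have the same zero. For `n > 1`,
suppose every zero of `b` lies outside `D`, pick one, `β`, and write `b = (X - β) w`. The polar
derivative `n a + (β - X) a'` of `a` with respect to `β` is apolar to `w`, and it has degree `n - 1`
because the centroid of the zeros of `a` lies in `D` while `β` does not. By Laguerre's theorem its
zeros lie in `D`: at `ζ ∉ D` its value is `a(ζ) (n + (β - ζ) Σ 1/(ζ - α))`, the sum running over
the zeros `α` of `a`, so if it vanished the mean of the `1/(ζ - α)` would be `1/(ζ - β)`; but
`z ↦ 1/(ζ - z)` maps `D` onto a disc, which contains the former and not the latter. The induction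
hypothesis then gives a zero of `w`, hence of `b`, in `D`.
-/

open ComplexConjugate

namespace Polynomial

variable {R : Type*} [CommRing R]

noncomputable def polarDeriv (n : ℕ) (β : R) (p : R[X]) : R[X] :=
  C (n : R) * p + (C β - X) * derivative p

theorem coeff_polarDeriv (n : ℕ) (β : R) (p : R[X]) (j : ℕ) :
    (polarDeriv n β p).coeff j = ((n : R) - j) * p.coeff j + β * (j + 1) * p.coeff (j + 1) := by
  rw [polarDeriv, coeff_add, coeff_C_mul, sub_mul, coeff_sub, coeff_C_mul, coeff_derivative]
  cases j with
  | zero => simp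
  | succ k =>
    rw [coeff_X_mul, coeff_derivative]
    push_cast
    ring

theorem natDegree_polarDeriv_le {m : ℕ} (β : R) {p : R[X]} (hp : p.natDegree ≤ m + 1) :
    (polarDeriv (m + 1) β p).natDegree ≤ m := by
  refine natDegree_le_iff_coeff_eq_zero.mpr fun k hk => ?_
  rw [coeff_polarDeriv, coeff_eq_zero_of_natDegree_lt (by omega : p.natDegree < k + 1)]
  obtain rfl | hk := (Nat.succ_le_of_lt hk).eq_or_lt
  · push_cast; ring
  · rw [coeff_eq_zero_of_natDegree_lt (by omega : p.natDegree < k)]; ring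

theorem coeff_polarDeriv_of_natDegree_eq {m : ℕ} (β : R) {p : R[X]} (hp : p.natDegree = m + 1) :
    (polarDeriv (m + 1) β p).coeff m = p.leadingCoeff * ((m + 1) * β) + p.nextCoeff := by
  rw [coeff_polarDeriv, nextCoeff_of_natDegree_pos (by omega), hp, leadingCoeff, hp]
  push_cast
  ring

theorem Splits.eval_polarDeriv {K : Type*} [Field K] {p : K[X]} (hp : p.Splits) {ζ : K}
    (hζ : p.eval ζ ≠ 0) (n : ℕ) (β : K) :
    (polarDeriv n β p).eval ζ =
      p.eval ζ * (n + (β - ζ) * (p.roots.map fun z => 1 / (ζ - z)).sum) := by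
  rw [polarDeriv, eval_add, eval_mul, eval_mul, eval_C, eval_sub, eval_C, eval_X,
    hp.eval_derivative_eq_eval_mul_sum hζ]
  ring

end Polynomial

theorem apolarSum_X_mul (m : ℕ) (u w : ℂ[X]) :
    apolarSum (m + 1) u (X * w) =
      ∑ j ∈ Finset.range (m + 1), (-1) ^ j * u.coeff j * w.coeff (m - j) / ((m + 1).choose j) := by
  rw [apolarSum, Finset.sum_range_succ, Nat.sub_self, coeff_X_mul_zero, mul_zero, zero_div,
    add_zero]
  refine Finset.sum_congr rfl fun j _ => ?_
  rw [show m + 1 - j = m - j + 1 by grind, coeff_X_mul]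

theorem apolarSum_of_coeff_eq_zero {m : ℕ} (u : ℂ[X]) {w : ℂ[X]} (hw : w.coeff (m + 1) = 0) :
    apolarSum (m + 1) u w = -∑ j ∈ Finset.range (m + 1),
      (-1) ^ j * u.coeff (j + 1) * w.coeff (m - j) / ((m + 1).choose (j + 1)) := by
  rw [apolarSum, Finset.sum_range_succ', Nat.sub_zero, hw, mul_zero, zero_div, add_zero,
    ← Finset.sum_neg_distrib]
  refine Finset.sum_congr rfl fun j _ => ?_
  rw [Nat.add_sub_add_right, pow_succ]
  ring

theorem apolarSum_sub_C_mul_right (N : ℕ) (u v w : ℂ[X]) (β : ℂ) :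
    apolarSum N u (v - C β * w) = apolarSum N u v - β * apolarSum N u w := by
  simp only [apolarSum, coeff_sub, coeff_C_mul, Finset.mul_sum, ← Finset.sum_sub_distrib]
  refine Finset.sum_congr rfl fun j _ => ?_
  ring

theorem apolarSum_X_sub_C_mul {m : ℕ} (u : ℂ[X]) (β : ℂ) {w : ℂ[X]} (hw : w.coeff (m + 1) = 0) :
    apolarSum (m + 1) u ((X - C β) * w) = ∑ j ∈ Finset.range (m + 1), (-1) ^ j * w.coeff (m - j) *
      (u.coeff j / (m + 1).choose j + β * u.coeff (j + 1) / (m + 1).choose (j + 1)) := by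
  rw [sub_mul, apolarSum_sub_C_mul_right, apolarSum_X_mul, apolarSum_of_coeff_eq_zero u hw,
    mul_neg, Finset.mul_sum, sub_neg_eq_add, ← Finset.sum_add_distrib]
  refine Finset.sum_congr rfl fun j _ => ?_
  ring

theorem apolarSum_polarDeriv {m : ℕ} (u : ℂ[X]) (β : ℂ) {w : ℂ[X]} (hw : w.coeff (m + 1) = 0) :
    apolarSum m (polarDeriv (m + 1) β u) w = (m + 1) * apolarSum (m + 1) u ((X - C β) * w) := by
  rw [apolarSum_X_sub_C_mul u β hw, apolarSum, Finset.mul_sum]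
  refine Finset.sum_congr rfl fun j hj => ?_
  have hj : j ≤ m := Nat.lt_succ_iff.mp (Finset.mem_range.mp hj)
  have h₁ : (m.choose j * (m + 1) : ℂ) = (m + 1).choose j * (m + 1 - j) := by
    have := congrArg (Nat.cast (R := ℂ)) (Nat.choose_mul_succ_eq m j)
    push_cast [Nat.cast_sub (show j ≤ m + 1 by omega)] at this
    exact this
  have h₂ : ((m + 1) * m.choose j : ℂ) = (m + 1).choose (j + 1) * (j + 1) := by
    exact_mod_cast Nat.add_one_mul_choose_eq m j
  have h₀ : (m.choose j : ℂ) ≠ 0 := by exact_mod_cast (Nat.choose_pos hj).ne'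
  have h₃ : ((m + 1).choose j : ℂ) ≠ 0 := by exact_mod_cast (Nat.choose_pos (by omega)).ne'
  have h₄ : ((m + 1).choose (j + 1) : ℂ) ≠ 0 := by exact_mod_cast (Nat.choose_pos (by omega)).ne'
  rw [coeff_polarDeriv]
  field_simp
  push_cast
  linear_combination (-w.coeff (m - j) * u.coeff j * (m + 1).choose (j + 1)) * h₁ -
    (w.coeff (m - j) * β * u.coeff (j + 1) * (m + 1).choose j) * h₂

theorem Multiset.norm_sub_le_of_sum_eq_card_nsmul {E : Type*} [SeminormedAddCommGroup E]
    [NormedSpace ℝ E] {s : Multiset E} (hs : s ≠ 0) {x z : E} {ε : ℝ}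
    (h : ∀ y ∈ s, ‖y - x‖ ≤ ε) (hz : s.sum = Multiset.card s • z) : ‖z - x‖ ≤ ε := by
  have hsum : Multiset.card s • (z - x) = (s.map (· - x)).sum := by
    rw [Multiset.sum_map_sub, Multiset.map_id', Multiset.map_const', Multiset.sum_replicate, hz,
      nsmul_sub]
  have hle : ‖(s.map (· - x)).sum‖ ≤ Multiset.card s • ε := by
    rw [← Multiset.card_map (· - x), ← Multiset.card_map norm]
    refine (norm_multiset_sum_le _).trans (Multiset.sum_le_card_nsmul _ _ ?_)
    simpa using h
  rw [← hsum, ← Nat.cast_smul_eq_nsmul ℝ, norm_smul, Real.norm_natCast, nsmul_eq_mul] at hle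
  exact le_of_mul_le_mul_left hle (by exact_mod_cast Multiset.card_pos.mpr hs)

theorem Complex.norm_conj_mul_sub_sq_sq (d e : ℂ) (r : ℝ) :
    ‖conj d * e - (r : ℂ) ^ 2‖ ^ 2 =
      r ^ 2 * ‖d - e‖ ^ 2 + (‖d‖ ^ 2 - r ^ 2) * (‖e‖ ^ 2 - r ^ 2) := by
  simp only [Complex.sq_norm, Complex.normSq_apply, Complex.sub_re, Complex.sub_im,
    Complex.mul_re, Complex.mul_im, Complex.conj_re, Complex.conj_im, ← Complex.ofReal_pow,
    Complex.ofReal_re, Complex.ofReal_im]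
  ring

-- `e ↦ (d - e)⁻¹` maps the disc `‖e‖ ≤ r` onto the disc with centre `conj d / (‖d‖² - r²)` and
-- radius `r / (‖d‖² - r²)`.
theorem Complex.norm_inv_sub_sub_le_iff {d e : ℂ} {r : ℝ} (hr : 0 ≤ r) (hd : r < ‖d‖)
    (hde : d ≠ e) :
    ‖(d - e)⁻¹ - conj d / (‖d‖ ^ 2 - r ^ 2 : ℝ)‖ ≤ r / (‖d‖ ^ 2 - r ^ 2) ↔ ‖e‖ ≤ r := by
  have hD : 0 < ‖d‖ ^ 2 - r ^ 2 := by nlinarith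
  have hde' : 0 < ‖d - e‖ := norm_pos_iff.mpr (sub_ne_zero.mpr hde)
  have hid : (d - e)⁻¹ - conj d / (‖d‖ ^ 2 - r ^ 2 : ℝ) =
      (conj d * e - (r : ℂ) ^ 2) / ((d - e) * (‖d‖ ^ 2 - r ^ 2 : ℝ)) := by
    have hD0 : ((‖d‖ ^ 2 - r ^ 2 : ℝ) : ℂ) ≠ 0 := by exact_mod_cast hD.ne'
    have hde0 : d - e ≠ 0 := sub_ne_zero.mpr hde
    field_simp
    push_cast
    rw [← Complex.conj_mul']
    ring
  rw [hid, norm_div, norm_mul, Complex.norm_real, Real.norm_of_nonneg hD.le, ← div_div,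
    div_le_div_iff_of_pos_right hD, div_le_iff₀ hde',
    ← sq_le_sq₀ (norm_nonneg _) (mul_nonneg hr (norm_nonneg _)), Complex.norm_conj_mul_sub_sq_sq,
    ← sq_le_sq₀ (norm_nonneg _) hr]
  constructor <;> intro h <;> nlinarith

theorem norm_sub_le_of_isRoot_polarDeriv {a : ℂ[X]} {c β ζ : ℂ} {r : ℝ} (ha : 0 < a.natDegree)
    (hroots : ∀ z, a.IsRoot z → ‖z - c‖ ≤ r) (hβ : r < ‖β - c‖)
    (hζ : (polarDeriv a.natDegree β a).IsRoot ζ) : ‖ζ - c‖ ≤ r := by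
  by_contra! hζc
  obtain ⟨z₀, hz₀⟩ := Complex.exists_root (natDegree_pos_iff_degree_pos.mp ha)
  have hr : 0 ≤ r := (norm_nonneg _).trans (hroots z₀ hz₀)
  have hsplit := IsAlgClosed.splits a
  have haζ : a.eval ζ ≠ 0 := fun h => (hroots ζ h).not_gt hζc
  set S := a.roots.map fun z => 1 / (ζ - z)
  have hcard : Multiset.card S = a.natDegree := by
    rw [Multiset.card_map, splits_iff_card_roots.mp hsplit]
  have h0 : a.natDegree + (β - ζ) * S.sum = 0 :=
    (mul_eq_zero.mp (hsplit.eval_polarDeriv haζ _ β ▸ hζ)).resolve_left haζ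
  have hζβ : ζ - β ≠ 0 := by
    intro h
    rw [show β - ζ = 0 by linear_combination -h, zero_mul, add_zero] at h0
    exact ha.ne' (by exact_mod_cast h0)
  have hsum : S.sum = Multiset.card S • (ζ - β)⁻¹ := by
    rw [hcard, nsmul_eq_mul]
    field_simp
    linear_combination -h0
  have hball : ∀ y ∈ S,
      ‖y - conj (ζ - c) / (‖ζ - c‖ ^ 2 - r ^ 2 : ℝ)‖ ≤ r / (‖ζ - c‖ ^ 2 - r ^ 2) := by
    simp only [S, Multiset.mem_map]
    rintro _ ⟨z, hz, rfl⟩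
    have hzc := hroots z (isRoot_of_mem_roots hz)
    have hne : ζ - c ≠ z - c := fun h => hζc.not_ge (sub_left_injective h ▸ hzc)
    simpa [one_div] using (Complex.norm_inv_sub_sub_le_iff hr hζc hne).mpr hzc
  have hS : S ≠ 0 := by
    rw [← Multiset.card_pos, hcard]; exact ha
  have hne : ζ - c ≠ β - c := fun h => hζβ (by linear_combination h)
  refine hβ.not_ge ((Complex.norm_inv_sub_sub_le_iff hr hζc hne).mp ?_)
  simpa using Multiset.norm_sub_le_of_sum_eq_card_nsmul hS hball hsum

theorem natDegree_polarDeriv_eq {a : ℂ[X]} {m : ℕ} {c β : ℂ} {r : ℝ} (ha : a.natDegree = m + 1)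
    (hroots : ∀ z, a.IsRoot z → ‖z - c‖ ≤ r) (hβ : r < ‖β - c‖) :
    (polarDeriv (m + 1) β a).natDegree = m := by
  refine le_antisymm (natDegree_polarDeriv_le β ha.le) (le_natDegree_of_ne_zero ?_)
  have hsplit := IsAlgClosed.splits a
  have hlc : a.leadingCoeff ≠ 0 := leadingCoeff_ne_zero.mpr (by rintro rfl; simp at ha)
  rw [coeff_polarDeriv_of_natDegree_eq β ha, hsplit.nextCoeff_eq_neg_sum_roots_mul_leadingCoeff]
  intro h
  have hsum : a.roots.sum = Multiset.card a.roots • β := by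
    rw [splits_iff_card_roots.mp hsplit, ha, nsmul_eq_mul]
    push_cast
    exact mul_left_cancel₀ hlc (by linear_combination -h)
  have hS : a.roots ≠ 0 := by
    rw [← Multiset.card_pos, splits_iff_card_roots.mp hsplit, ha]; omega
  exact hβ.not_ge (Multiset.norm_sub_le_of_sum_eq_card_nsmul hS
    (fun z hz => hroots z (isRoot_of_mem_roots hz)) hsum)

theorem isRoot_of_apolarSum_one_eq_zero {a b : ℂ[X]} {α : ℂ} (ha : a.natDegree = 1)
    (hb : b.natDegree ≤ 1) (hα : a.IsRoot α) (hab : apolarSum 1 a b = 0) : b.IsRoot α := by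
  have hlc : a.coeff 1 ≠ 0 := by
    rw [← ha]; exact leadingCoeff_ne_zero.mpr (by rintro rfl; simp at ha)
  rw [IsRoot.def, eval_eq_sum_range, ha] at hα
  rw [IsRoot.def, eval_eq_sum_range' (n := 2) (by omega)]
  simp only [apolarSum, Finset.sum_range_succ, Finset.range_one, Finset.sum_singleton, pow_zero,
    pow_one, mul_one, one_mul, neg_mul, zero_add, tsub_zero, tsub_self, Nat.reduceAdd,
    Nat.choose_succ_self_right, Nat.choose_self, Nat.cast_one, div_one] at hα hab ⊢
  exact mul_left_cancel₀ hlc (by linear_combination -hab + b.coeff 1 * hα)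

theorem grace_closed_disc_general (n : ℕ) (hn : 1 ≤ n)
    (a b : Polynomial ℂ) (ha : a.natDegree = n) (hb : b.natDegree = n)
    (c : ℂ) (r : ℝ)
    (hapolar : apolarSum n a b = 0)
    (hzeros : ∀ z : ℂ, a.IsRoot z → ‖z - c‖ ≤ r) :
    ∃ w : ℂ, b.IsRoot w ∧ ‖w - c‖ ≤ r := by
  induction n, hn using Nat.le_induction generalizing a b with
  | base =>
    obtain ⟨α, hα⟩ := Complex.exists_root (f := a) (natDegree_pos_iff_degree_pos.mp (by omega))
    exact ⟨α, isRoot_of_apolarSum_one_eq_zero ha hb.le hα hapolar, hzeros α hα⟩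
  | succ m _ ih =>
    by_contra! hfar
    obtain ⟨β, hβ⟩ := Complex.exists_root (f := b) (natDegree_pos_iff_degree_pos.mp (by omega))
    obtain ⟨w, rfl⟩ := dvd_iff_isRoot.mpr hβ
    have hw0 : w ≠ 0 := by rintro rfl; simp at hb
    have hw : w.natDegree = m := by
      rw [natDegree_mul (X_sub_C_ne_zero β) hw0, natDegree_X_sub_C] at hb; omega
    have hβc := hfar β hβ
    obtain ⟨z, hz, hzc⟩ := ih (polarDeriv (m + 1) β a) w
      (natDegree_polarDeriv_eq ha hzeros hβc) hw
      (by rw [apolarSum_polarDeriv a β (coeff_eq_zero_of_natDegree_lt (by omega)), hapolar,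
        mul_zero])
      (fun z hz => norm_sub_le_of_isRoot_polarDeriv (by omega) hzeros hβc (ha ▸ hz))
    exact (hfar z (by simp [hz.eq_zero])).not_ge hzc

/-- **Grace's theorem (closed-disc case).** If `a` and `b` are apolar polynomials of
degree `n ≥ 1` and all zeros of `a` lie in the closed disc `{z : |z - c| ≤ r}`,
then at least one zero of `b` lies in that disc. -/
theorem grace_closed_disc (n : ℕ) (hn : 1 ≤ n)
    (a b : Polynomial ℂ) (ha : a.natDegree = n) (hb : b.natDegree = n)
    (c : ℂ) (r : ℝ) (hr : 0 < r)
    (hapolar : apolarSum n a b = 0)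
    (hzeros : ∀ z : ℂ, a.IsRoot z → ‖z - c‖ ≤ r) :
    ∃ w : ℂ, b.IsRoot w ∧ ‖w - c‖ ≤ r :=
  grace_closed_disc_general n hn a b ha hb c r hapolar hzeros
end

section
/- Let z_1,...,z_k be complex numbers with |z_i| ≤ 1 for all i, let a_1,...,a_k be complex numbers, and define S_m = Σ_{i=1}^k a_i z_i^m for every nonnegative integer m. Suppose S_m = δ_{m,k-1} for 0 ≤ m ≤ k-1 (i.e. S_m = 0 for 0 ≤ m ≤ k-2 and S_{k-1} = 1). Then for every nonnegative integer m, |S_m| ≤ α^{m-k+1}, where α = 1/(2^{1/k} - 1). -/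
/-!
The power sums satisfy the linear recurrence whose characteristic polynomial is
`P = ∏ (X - z_i)`. Since `|z_i| ≤ 1`, Vieta's formulas bound the coefficients of `P` by those of
`(X + 1)^k`, so `|S_{n+k}| ≤ ∑_{j<k} C(k,j) |S_{n+j}|`. The bound `α^{m-k+1}` propagates through
this recurrence because `α` is the positive root of `(α + 1)^k = 2 α^k`, i.e.
`∑_{j<k} C(k,j) α^j = α^k`; the initial values are `δ_{m,k-1}`, which fits the bound exactly.
-/

open Polynomial Finset

theorem Polynomial.Monic.sum_mul_pow_add_natDegree {ι R : Type*} [CommRing R] {P : R[X]}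
    (hP : P.Monic) (s : Finset ι) (a z : ι → R) (hroot : ∀ i ∈ s, P.IsRoot (z i)) (n : ℕ) :
    ∑ i ∈ s, a i * z i ^ (n + P.natDegree) =
      -∑ j ∈ range P.natDegree, P.coeff j * ∑ i ∈ s, a i * z i ^ (n + j) := by
  have hsum : ∑ j ∈ range (P.natDegree + 1), P.coeff j * ∑ i ∈ s, a i * z i ^ (n + j) = 0 := by
    calc _ = ∑ i ∈ s, a i * z i ^ n * P.eval (z i) := by
          simp only [eval_eq_sum_range, mul_sum, pow_add]
          rw [sum_comm]
          exact sum_congr rfl fun i _ ↦ sum_congr rfl fun j _ ↦ by ring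
      _ = 0 := sum_eq_zero fun i hi ↦ by rw [hroot i hi, mul_zero]
  rw [sum_range_succ, hP.coeff_natDegree, one_mul] at hsum
  exact eq_neg_of_add_eq_zero_right hsum

theorem sum_mul_pow_add_card {ι R : Type*} [CommRing R] [Nontrivial R] (s : Finset ι)
    (a z : ι → R) (n : ℕ) :
    ∑ i ∈ s, a i * z i ^ (n + #s) =
      -∑ j ∈ range #s, (∏ i ∈ s, (X - C (z i))).coeff j * ∑ i ∈ s, a i * z i ^ (n + j) := by
  have hroot (i : ι) (hi : i ∈ s) : (∏ j ∈ s, (X - C (z j))).IsRoot (z i) := by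
    rw [IsRoot, eval_prod]
    exact prod_eq_zero hi (by simp)
  simpa only [natDegree_finsetProd_X_sub_C_eq_card] using
    (monic_prod_X_sub_C z s).sum_mul_pow_add_natDegree s a z hroot n

theorem norm_coeff_prod_X_sub_C_le {ι R : Type*} [NormedCommRing R] [NormOneClass R]
    (s : Finset ι) (z : ι → R) (hz : ∀ i ∈ s, ‖z i‖ ≤ 1) {j : ℕ} (hj : j ≤ #s) :
    ‖(∏ i ∈ s, (X - C (z i))).coeff j‖ ≤ (#s).choose j := by
  have hvieta := Finset.prod_X_add_C_coeff s (fun i ↦ -z i) hj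
  simp only [map_neg, ← sub_eq_add_neg] at hvieta
  rw [hvieta, ← Nat.choose_symm hj, ← card_powersetCard, cast_card]
  refine norm_sum_le_of_le _ fun t ht ↦ (Finset.norm_prod_le _ _).trans ?_
  refine prod_le_one (fun _ _ ↦ norm_nonneg _) fun i hi ↦ ?_
  rw [norm_neg]
  exact hz i ((mem_powersetCard.1 ht).1 hi)

theorem norm_le_mul_pow_of_linear_recurrence {R : Type*} [SeminormedRing R] {k : ℕ}
    {S c : ℕ → R} {b : ℕ → ℝ} {M ρ : ℝ} (hM : 0 ≤ M) (hρ : 0 ≤ ρ)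
    (hc : ∀ j < k, ‖c j‖ ≤ b j) (hb : ∑ j ∈ range k, b j * ρ ^ j ≤ ρ ^ k)
    (hrec : ∀ n, S (n + k) = -∑ j ∈ range k, c j * S (n + j))
    (hinit : ∀ m < k, ‖S m‖ ≤ M * ρ ^ m) (m : ℕ) : ‖S m‖ ≤ M * ρ ^ m := by
  induction m using Nat.strong_induction_on with
  | _ m ih =>
  rcases lt_or_ge m k with hm | hm
  · exact hinit m hm
  obtain ⟨n, rfl⟩ := Nat.exists_eq_add_of_le' hm
  calc ‖S (n + k)‖ = ‖∑ j ∈ range k, c j * S (n + j)‖ := by rw [hrec, norm_neg]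
    _ ≤ ∑ j ∈ range k, ‖c j‖ * ‖S (n + j)‖ := norm_sum_le_of_le _ fun j _ ↦ norm_mul_le _ _
    _ ≤ ∑ j ∈ range k, b j * (M * ρ ^ (n + j)) := sum_le_sum fun j hj ↦ by
        have hj := mem_range.1 hj
        exact mul_le_mul (hc j hj) (ih _ (by omega)) (norm_nonneg _)
          ((norm_nonneg _).trans (hc j hj))
    _ = M * ρ ^ n * ∑ j ∈ range k, b j * ρ ^ j := by
        rw [mul_sum]
        exact sum_congr rfl fun j _ ↦ by ring
    _ ≤ M * ρ ^ n * ρ ^ k := by gcongr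
    _ = M * ρ ^ (n + k) := by ring

theorem sum_range_choose_mul_pow {R : Type*} [CommRing R] (x : R) (n : ℕ) :
    ∑ j ∈ range n, (n.choose j : R) * x ^ j = (x + 1) ^ n - x ^ n := by
  rw [add_pow, sum_range_succ, Nat.choose_self]
  simp only [one_pow, mul_one, Nat.cast_one]
  rw [add_sub_cancel_right]
  exact sum_congr rfl fun j _ ↦ mul_comm _ _

theorem add_one_pow_eq_two_mul_pow {k : ℕ} (hk : k ≠ 0) {α : ℝ}
    (hα : α = 1 / (2 ^ ((1 : ℝ) / k) - 1)) : (α + 1) ^ k = 2 * α ^ k := by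
  have hr : (1 : ℝ) < 2 ^ ((1 : ℝ) / k) := Real.one_lt_rpow (by norm_num) (by positivity)
  have hrk : ((2 : ℝ) ^ ((1 : ℝ) / k)) ^ k = 2 := by
    rw [one_div]
    exact Real.rpow_inv_natCast_pow (by norm_num) hk
  have hα' : α + 1 = 2 ^ ((1 : ℝ) / k) * α := by
    rw [hα]
    generalize (2 : ℝ) ^ ((1 : ℝ) / k) = r at hr
    field_simp [(sub_pos.2 hr).ne']
    ring
  rw [hα', mul_pow, hrk]

/-- **Estimate (2) of the paper.** Let `|z_i| ≤ 1` and let `S_m = Σ_{i=1}^k a_i z_i^m`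
satisfy `S_m = δ_{m,k-1}` for `0 ≤ m ≤ k-1`. Then `|S_m| ≤ α^{m-k+1}` for every
`m ≥ 0`, where `α = 1/(2^{1/k} - 1)`. -/
theorem power_sum_estimate (k : ℕ) (hk : 1 ≤ k)
    (z a : Fin k → ℂ) (hz : ∀ i, ‖z i‖ ≤ 1)
    (S : ℕ → ℂ) (hS : ∀ m : ℕ, S m = ∑ i, a i * z i ^ m)
    (hinit : ∀ m : ℕ, m ≤ k - 1 → S m = if m = k - 1 then 1 else 0)
    (α : ℝ) (hα : α = 1 / (2 ^ ((1 : ℝ) / k) - 1)) :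
    ∀ m : ℕ, ‖S m‖ ≤ α ^ ((m : ℤ) - k + 1) := by
  have hk0 : k ≠ 0 := by omega
  have hαpos : 0 < α :=
    hα ▸ one_div_pos.2 (sub_pos.2 (Real.one_lt_rpow one_lt_two (by positivity)))
  have hpow (m : ℕ) : α ^ (1 - k : ℤ) * α ^ m = α ^ ((m : ℤ) - k + 1) := by
    rw [← zpow_natCast, ← zpow_add₀ hαpos.ne']
    ring_nf
  have hchar : ∑ j ∈ range k, (k.choose j : ℝ) * α ^ j ≤ α ^ k := by
    rw [sum_range_choose_mul_pow, add_one_pow_eq_two_mul_pow hk0 hα]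
    linarith
  have hrec (n : ℕ) :
      S (n + k) = -∑ j ∈ range k, (∏ i, (X - C (z i))).coeff j * S (n + j) := by
    simpa only [← hS, card_univ, Fintype.card_fin] using sum_mul_pow_add_card univ a z n
  have hcoeff (j : ℕ) (hj : j < k) : ‖(∏ i, (X - C (z i))).coeff j‖ ≤ k.choose j := by
    simpa using norm_coeff_prod_X_sub_C_le univ z (fun i _ ↦ hz i) (j := j) (by simp; omega)
  have hbase (m : ℕ) (hm : m < k) : ‖S m‖ ≤ α ^ (1 - k : ℤ) * α ^ m := by
    rw [hpow, hinit m (by omega)]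
    split_ifs with h
    · rw [norm_one, h]
      simp [hk]
    · rw [norm_zero]
      positivity
  intro m
  rw [← hpow]
  exact norm_le_mul_pow_of_linear_recurrence (by positivity) hαpos.le hcoeff hchar hrec hbase m
end

section
/- Let p(z) be a complex polynomial of degree n and let z_1,...,z_k be zeros of p (i.e. p(z_i) = 0 for each i). Then for any complex numbers a_1,...,a_k, A_n(p, Σ_{i=1}^k a_i (z - z_i)^n) = 0. -/
open Polynomial

lemma apolarSum_sum (N : ℕ) (u : Polynomial ℂ) {ι : Type*} (s : Finset ι)
    (f : ι → Polynomial ℂ) :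
    apolarSum N u (∑ i ∈ s, f i) = ∑ i ∈ s, apolarSum N u (f i) := by
  unfold apolarSum
  rw [Finset.sum_comm]
  refine Finset.sum_congr rfl fun j _ => ?_
  simp [Polynomial.finset_sum_coeff, Finset.mul_sum, Finset.sum_div]

lemma apolarSum_single (n : ℕ) (p : Polynomial ℂ) (hp : p.natDegree = n)
    (w c : ℂ) :
    apolarSum n p (C c * (X - C w) ^ n) = c * p.eval w := by
  have hev : p.eval w = ∑ j ∈ Finset.range (n + 1), p.coeff j * w ^ j := by
    rw [eval_eq_sum_range' (by omega : p.natDegree < n + 1)]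
  rw [hev, Finset.mul_sum]
  unfold apolarSum
  refine Finset.sum_congr rfl fun j hj => ?_
  have hjn : j ≤ n := by simpa using Nat.lt_succ_iff.mp (Finset.mem_range.mp hj)
  have hc : ((X - C w) ^ n).coeff (n - j) = (-w) ^ j * (n.choose j : ℂ) := by
    have : (X - C w : Polynomial ℂ) = X + C (-w) := by rw [map_neg, sub_eq_add_neg]
    rw [this, coeff_X_add_C_pow, Nat.sub_sub_self hjn, Nat.choose_symm hjn]
  have hne : (n.choose j : ℂ) ≠ 0 := by
    exact_mod_cast Nat.cast_ne_zero.mpr (Nat.choose_pos hjn).ne'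
  rw [coeff_C_mul, hc]
  field_simp
  ring_nf
  simp [pow_mul']

/-- If `p` has degree `n` and `z_1, …, z_k` are zeros of `p`, then for any complex
numbers `a_1, …, a_k`, `A_n(p, Σ_{i=1}^k a_i (z - z_i)^n) = 0`. -/
theorem weakly_apolar_linear_combination (n k : ℕ) (p : Polynomial ℂ)
    (hp : p.natDegree = n) (z : Fin k → ℂ) (hz : ∀ i, p.IsRoot (z i))
    (a : Fin k → ℂ) :
    apolarSum n p (∑ i, C (a i) * (X - C (z i)) ^ n) = 0 := by
  rw [apolarSum_sum]
  refine Finset.sum_eq_zero fun i _ => ?_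
  rw [apolarSum_single n p hp, (hz i).eq_zero, mul_zero]
end

section
/- Let z_1,...,z_k be pairwise distinct complex numbers and let a_1,...,a_k be complex numbers such that Σ_{i=1}^k a_i z_i^m = δ_{m,k-1} for 0 ≤ m ≤ k-1. Let n ≥ k and set t(z) = Σ_{i=1}^k a_i (z - z_i)^n. Then t(z) = Σ_{i=k-1}^n C(n,i) S_i (-1)^i z^{n-i} where S_m = Σ_{i=1}^k a_i z_i^m, and t is a polynomial of degree exactly n-k+1 with leading coefficient (-1)^{k-1} C(n,k-1). -/
open Polynomial

/-- **Structure of the polynomial `t`.** If `Σ_{i=1}^k a_i z_i^m = δ_{m,k-1}` for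
`0 ≤ m ≤ k-1` (with the `z_i` pairwise distinct) and `t(z) = Σ_{i=1}^k a_i (z-z_i)^n`
with `n ≥ k`, then `t(z) = Σ_{i=k-1}^n C(n,i) S_i (-1)^i z^{n-i}` where
`S_m = Σ_{i=1}^k a_i z_i^m`, and `t` has degree exactly `n-k+1` with leading
coefficient `(-1)^{k-1} C(n,k-1)`. -/
theorem t_poly_structure (k n : ℕ) (hk : 1 ≤ k) (hkn : k ≤ n)
    (z a : Fin k → ℂ) (hinj : Function.Injective z)
    (hvdm : ∀ m : ℕ, m ≤ k - 1 →
      (∑ i, a i * z i ^ m) = if m = k - 1 then 1 else 0)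
    (S : ℕ → ℂ) (hS : ∀ m : ℕ, S m = ∑ i, a i * z i ^ m)
    (t : Polynomial ℂ) (ht : t = ∑ i, C (a i) * (X - C (z i)) ^ n) :
    t = (∑ i ∈ Finset.Icc (k - 1) n,
          C ((n.choose i : ℂ) * S i * (-1) ^ i) * X ^ (n - i)) ∧
    t.natDegree = n - k + 1 ∧
    t.leadingCoeff = (-1) ^ (k - 1) * (n.choose (k - 1) : ℂ) := by
  have hSzero : ∀ m : ℕ, m < k - 1 → S m = 0 := by
    intro m hm
    rw [hS, hvdm m hm.le, if_neg hm.ne]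
  have hSone : S (k - 1) = 1 := by
    rw [hS, hvdm (k - 1) le_rfl, if_pos rfl]
  -- coefficient formula for t
  have htc : ∀ d : ℕ, t.coeff d = (n.choose d : ℂ) * (-1) ^ (n - d) * S (n - d) := by
    intro d
    rw [ht, finset_sum_coeff, hS, Finset.mul_sum]
    apply Finset.sum_congr rfl
    intro i _
    have h1 : (X - C (z i)) = X + C (-(z i)) := by rw [map_neg]; ring
    rw [h1, coeff_C_mul, coeff_X_add_C_pow, neg_pow]
    ring
  have hD : n - k + 1 = n - (k - 1) := by omega
  -- the polynomial identity
  have heq : t = (∑ i ∈ Finset.Icc (k - 1) n,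
      C ((n.choose i : ℂ) * S i * (-1) ^ i) * X ^ (n - i)) := by
    ext d
    rw [htc, finset_sum_coeff]
    simp only [coeff_C_mul, coeff_X_pow]
    by_cases hd : d ≤ n - (k - 1)
    · rw [Finset.sum_eq_single (n - d)]
      · rw [if_pos (by omega), Nat.choose_symm (by omega : d ≤ n)]
        ring
      · intro j hj hjne
        rw [Finset.mem_Icc] at hj
        rw [if_neg (by omega), mul_zero]
      · intro h
        exact absurd (Finset.mem_Icc.mpr ⟨by omega, by omega⟩) h
    · rw [Finset.sum_eq_zero]
      · by_cases hdn : d ≤ n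
        · rw [hSzero (n - d) (by omega)]
          ring
        · rw [Nat.choose_eq_zero_of_lt (by omega)]
          push_cast
          ring
      · intro j hj
        rw [Finset.mem_Icc] at hj
        rw [if_neg (by omega), mul_zero]
  -- degree bounds
  have hle : t.natDegree ≤ n - k + 1 := by
    rw [heq]
    refine (Polynomial.natDegree_sum_le _ _).trans ?_
    rw [Finset.fold_max_le]
    refine ⟨by omega, fun j hj => ?_⟩
    rw [Finset.mem_Icc] at hj
    exact (natDegree_C_mul_X_pow_le _ _).trans (by omega)
  have hcoeff : t.coeff (n - k + 1) = (-1) ^ (k - 1) * (n.choose (k - 1) : ℂ) := by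
    rw [htc]
    have h1 : n - (n - k + 1) = k - 1 := by omega
    rw [h1, hSone, hD, Nat.choose_symm (by omega : k - 1 ≤ n)]
    ring
  have hne : t.coeff (n - k + 1) ≠ 0 := by
    rw [hcoeff]
    have : (n.choose (k - 1) : ℂ) ≠ 0 := by
      exact Nat.cast_ne_zero.mpr (Nat.choose_pos (by omega : k - 1 ≤ n)).ne'
    simp [this]
  have hdeg : t.natDegree = n - k + 1 := le_antisymm hle (le_natDegree_of_ne_zero hne)
  refine ⟨heq, hdeg, ?_⟩
  rw [leadingCoeff, hdeg, hcoeff]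
end

section
/- Let z_1,...,z_k be pairwise distinct complex numbers with |z_i| ≤ 1, and let a_1,...,a_k be complex numbers such that Σ_{i=1}^k a_i z_i^m = δ_{m,k-1} for 0 ≤ m ≤ k-1. Let n ≥ k and set t(z) = Σ_{i=1}^k a_i (z - z_i)^n. Then every zero w of t satisfies |w| < 2(n-k+1)/ln 2. -/
/-!
Write `S p = ∑ i, a i * z i ^ p`. Dropping the last node `ζ` and replacing the weights by
`a i * (z i - ζ)` gives a system of the same kind one level lower, with
`S (p + 1) = ζ * S p + S' p`; since `‖ζ‖ ≤ 1`, Pascal's rule yields `‖S p‖ ≤ p.choose (k - 1)`.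

Expanding `(z i - w) ^ n` binomially, `± t(w) = ∑ j, n.choose j * S j * (-w) ^ (n - j)`, whose
term `j = k - 1` has norm `n.choose (k - 1) * ‖w‖ ^ d`, `d = n - k + 1`. At a root this term is
bounded by the sum of the norms of the others, and as
`∑ j, n.choose j * j.choose (k - 1) * x ^ (n - j) = n.choose (k - 1) * (x + 1) ^ d`,
this says `2 * ‖w‖ ^ d ≤ (‖w‖ + 1) ^ d`. But `(1 + 1 / x) ^ d ≤ exp (d / x) < 2`
once `x ≥ 2 d / log 2`.
-/

open Polynomial Finset

section WeightedPowerSum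

variable {R : Type*} [CommRing R]

def weightedPowerSum {ι : Type*} [Fintype ι] (a z : ι → R) (p : ℕ) : R := ∑ i, a i * z i ^ p

theorem sum_mul_add_pow_eq {ι : Type*} [Fintype ι] (a z : ι → R) (x : R) (n : ℕ) :
    ∑ i, a i * (z i + x) ^ n =
      ∑ j ∈ range (n + 1), weightedPowerSum a z j * x ^ (n - j) * n.choose j := by
  simp only [add_pow, mul_sum, weightedPowerSum, sum_mul]
  rw [sum_comm]
  exact sum_congr rfl fun j _ => sum_congr rfl fun i _ => by ring

theorem weightedPowerSum_succ {k : ℕ} (a z : Fin (k + 2) → R) (p : ℕ) :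
    weightedPowerSum a z (p + 1) = z (Fin.last _) * weightedPowerSum a z p +
      weightedPowerSum (fun i : Fin (k + 1) => a i.castSucc * (z i.castSucc - z (Fin.last _)))
        (fun i => z i.castSucc) p := by
  have hsplit : weightedPowerSum a z (p + 1) - z (Fin.last _) * weightedPowerSum a z p =
      ∑ i, a i * z i ^ p * (z i - z (Fin.last _)) := by
    simp only [weightedPowerSum, mul_sum, ← sum_sub_distrib]
    exact sum_congr rfl fun i _ => by ring
  rw [← sub_eq_iff_eq_add', hsplit, Fin.sum_univ_castSucc, sub_self, mul_zero, add_zero,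
    weightedPowerSum]
  exact sum_congr rfl fun i _ => by ring

end WeightedPowerSum

theorem norm_weightedPowerSum_le_choose {𝕜 : Type*} [NormedField 𝕜] (k : ℕ)
    (a z : Fin (k + 1) → 𝕜) (hz : ∀ i, ‖z i‖ ≤ 1)
    (hv : ∀ m ≤ k, weightedPowerSum a z m = if m = k then 1 else 0) (p : ℕ) :
    ‖weightedPowerSum a z p‖ ≤ p.choose k := by
  induction k generalizing p with
  | zero =>
    have ha : a 0 = 1 := by simpa [weightedPowerSum] using hv 0 le_rfl
    simpa [weightedPowerSum, ha] using pow_le_one₀ (norm_nonneg _) (hz 0)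
  | succ k ih =>
    have hv' : ∀ m ≤ k, weightedPowerSum
        (fun i : Fin (k + 1) => a i.castSucc * (z i.castSucc - z (Fin.last _)))
        (fun i => z i.castSucc) m = if m = k then 1 else 0 := by
      intro m hm
      rw [eq_sub_of_add_eq' (weightedPowerSum_succ a z m).symm, hv m (by omega),
        hv (m + 1) (by omega)]
      simp [show m ≠ k + 1 by omega]
    induction p with
    | zero => simp [hv 0 (Nat.zero_le _)]
    | succ p ihp =>
      calc ‖weightedPowerSum a z (p + 1)‖
          ≤ 1 * p.choose (k + 1) + p.choose k := by
            rw [weightedPowerSum_succ]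
            refine (norm_add_le _ _).trans (add_le_add ?_ (ih _ _ (fun i => hz _) hv' p))
            rw [norm_mul]
            exact mul_le_mul (hz _) ihp (norm_nonneg _) zero_le_one
        _ = (p + 1).choose (k + 1) := by
            rw [Nat.choose_succ_succ', one_mul, add_comm]; push_cast; ring

theorem two_mul_norm_le_sum_norm_of_sum_eq_zero {ι E : Type*} [SeminormedAddCommGroup E]
    {s : Finset ι} {f : ι → E} (hf : ∑ j ∈ s, f j = 0) {i : ι} (hi : i ∈ s) :
    2 * ‖f i‖ ≤ ∑ j ∈ s, ‖f j‖ := by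
  classical
  have hrest : ∑ j ∈ s.erase i, f j = -f i :=
    eq_neg_of_add_eq_zero_right (by rwa [add_sum_erase s f hi])
  calc 2 * ‖f i‖ = ‖f i‖ + ‖∑ j ∈ s.erase i, f j‖ := by rw [hrest, norm_neg]; ring
    _ ≤ ‖f i‖ + ∑ j ∈ s.erase i, ‖f j‖ := by gcongr; exact norm_sum_le _ _
    _ = ∑ j ∈ s, ‖f j‖ := add_sum_erase s (fun j => ‖f j‖) hi

theorem sum_range_choose_mul_choose_mul_pow {R : Type*} [CommSemiring R] (k d : ℕ) (x : R) :
    ∑ j ∈ range (k + d + 1), ((k + d).choose j * j.choose k : ℕ) * x ^ (k + d - j) =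
      (k + d).choose k * (x + 1) ^ d := by
  rw [add_assoc, sum_range_add, sum_eq_zero fun j hj => by
    rw [Nat.choose_eq_zero_of_lt (mem_range.1 hj), mul_zero, Nat.cast_zero, zero_mul], zero_add,
    add_comm x, add_pow, mul_sum]
  refine sum_congr rfl fun j hj => ?_
  rw [Nat.choose_mul (Nat.le_add_right k j)]
  simp only [Nat.add_sub_cancel_left, Nat.cast_mul, one_pow, one_mul]
  rw [show k + d - (k + j) = d - j by omega]
  ring

open Real in
theorem add_one_pow_lt_two_mul_pow {d : ℕ} {x : ℝ} (hx0 : 0 < x) (hx : 2 * d / log 2 ≤ x) :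
    (x + 1) ^ d < 2 * x ^ d := by
  have hlog : 0 < log 2 := log_pos one_lt_two
  have hexp : (1 + 1 / x) ^ d < 2 := calc
    (1 + 1 / x) ^ d ≤ exp (1 / x) ^ d := by gcongr; linarith [add_one_le_exp (1 / x)]
    _ = exp (d / x) := by rw [← exp_nat_mul, mul_one_div]
    _ ≤ exp (log 2 / 2) := by
      refine exp_le_exp.2 ((div_le_iff₀ hx0).2 ?_)
      rw [div_le_iff₀ hlog] at hx
      linarith
    _ < exp (log 2) := by gcongr; linarith
    _ = 2 := exp_log two_pos
  calc (x + 1) ^ d = (1 + 1 / x) ^ d * x ^ d := by rw [← mul_pow]; congr 1; field_simp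
    _ < 2 * x ^ d := by gcongr

theorem two_mul_norm_pow_le_of_sum_mul_sub_pow_eq_zero {𝕜 : Type*} [RCLike 𝕜] (k d : ℕ)
    (a z : Fin (k + 1) → 𝕜) (hz : ∀ i, ‖z i‖ ≤ 1)
    (hv : ∀ m ≤ k, weightedPowerSum a z m = if m = k then 1 else 0) {w : 𝕜}
    (hw : ∑ i, a i * (w - z i) ^ (k + d) = 0) :
    2 * ‖w‖ ^ d ≤ (‖w‖ + 1) ^ d := by
  set n := k + d
  set f : ℕ → 𝕜 := fun j => weightedPowerSum a z j * (-w) ^ (n - j) * n.choose j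
  have hf : ∑ j ∈ range (n + 1), f j = 0 := by
    rw [← sum_mul_add_pow_eq, ← mul_zero ((-1 : 𝕜) ^ n), ← hw, mul_sum]
    refine sum_congr rfl fun i _ => ?_
    rw [← sub_eq_add_neg, ← neg_sub, neg_pow]
    ring
  have hfk : ‖f k‖ = n.choose k * ‖w‖ ^ d := by
    simp [f, hv k le_rfl, n, mul_comm]
  have hfj : ∀ j, ‖f j‖ ≤ (n.choose j * j.choose k : ℕ) * ‖w‖ ^ (n - j) := by
    intro j
    rw [norm_mul, norm_mul, norm_pow, norm_neg, RCLike.norm_natCast, Nat.cast_mul]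
    have hS := norm_weightedPowerSum_le_choose k a z hz hv j
    calc ‖weightedPowerSum a z j‖ * ‖w‖ ^ (n - j) * n.choose j
        ≤ j.choose k * ‖w‖ ^ (n - j) * n.choose j := by gcongr
      _ = _ := by ring
  have hpos : (0 : ℝ) < n.choose k := by exact_mod_cast Nat.choose_pos (by omega)
  refine le_of_mul_le_mul_left ?_ hpos
  calc n.choose k * (2 * ‖w‖ ^ d) = 2 * ‖f k‖ := by rw [hfk]; ring
    _ ≤ ∑ j ∈ range (n + 1), ‖f j‖ :=
      two_mul_norm_le_sum_norm_of_sum_eq_zero hf (mem_range.2 (by omega))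
    _ ≤ ∑ j ∈ range (n + 1), ((n.choose j * j.choose k : ℕ) * ‖w‖ ^ (n - j) : ℝ) :=
      sum_le_sum fun j _ => hfj j
    _ = n.choose k * (‖w‖ + 1) ^ d := sum_range_choose_mul_choose_mul_pow k d ‖w‖

theorem t_poly_zero_bound_general (k n : ℕ) (hk : 1 ≤ k) (hkn : k ≤ n)
    (z a : Fin k → ℂ)
    (hz : ∀ i, ‖z i‖ ≤ 1)
    (hvdm : ∀ m : ℕ, m ≤ k - 1 →
      (∑ i, a i * z i ^ m) = if m = k - 1 then 1 else 0)
    (t : Polynomial ℂ) (ht : t = ∑ i, C (a i) * (X - C (z i)) ^ n) :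
    ∀ w : ℂ, t.IsRoot w → ‖w‖ < 2 * ((n : ℝ) - k + 1) / Real.log 2 := by
  obtain ⟨k, rfl⟩ : ∃ k', k = k' + 1 := ⟨k - 1, by omega⟩
  obtain ⟨d, rfl⟩ : ∃ d, n = k + 1 + d := ⟨n - (k + 1), by omega⟩
  intro w hw
  have hroot : ∑ i, a i * (w - z i) ^ (k + (d + 1)) = 0 := by
    simpa [ht, eval_finsetSum, add_assoc, add_comm 1 d] using hw
  have hbound : 2 * ‖w‖ ^ (d + 1) ≤ (‖w‖ + 1) ^ (d + 1) :=
    two_mul_norm_pow_le_of_sum_mul_sub_pow_eq_zero k (d + 1) a z hz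
      (by simpa [weightedPowerSum] using hvdm) hroot
  by_contra! hw_large
  have hd : 2 * ((↑(k + 1 + d) : ℝ) - ↑(k + 1) + 1) = 2 * ↑(d + 1) := by push_cast; ring
  rw [hd] at hw_large
  have hw0 : 0 < ‖w‖ := lt_of_lt_of_le (by positivity) hw_large
  exact (add_one_pow_lt_two_mul_pow hw0 hw_large).not_ge hbound

/-- **Zeros of `t` are in the disc `|z| < 2(n-k+1)/ln 2`.** Let `z_1, …, z_k` be
pairwise distinct points of the closed unit disc, and `a_1, …, a_k` be such that
`Σ_{i=1}^k a_i z_i^m = δ_{m,k-1}` for `0 ≤ m ≤ k-1`. Let `n ≥ k` and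
`t(z) = Σ_{i=1}^k a_i (z-z_i)^n`. Then every zero `w` of `t` satisfies
`|w| < 2(n-k+1)/ln 2`. -/
theorem t_poly_zero_bound (k n : ℕ) (hk : 1 ≤ k) (hkn : k ≤ n)
    (z a : Fin k → ℂ) (hinj : Function.Injective z)
    (hz : ∀ i, ‖z i‖ ≤ 1)
    (hvdm : ∀ m : ℕ, m ≤ k - 1 →
      (∑ i, a i * z i ^ m) = if m = k - 1 then 1 else 0)
    (t : Polynomial ℂ) (ht : t = ∑ i, C (a i) * (X - C (z i)) ^ n) :
    ∀ w : ℂ, t.IsRoot w → ‖w‖ < 2 * ((n : ℝ) - k + 1) / Real.log 2 :=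
  t_poly_zero_bound_general k n hk hkn z a hz hvdm t ht
end
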